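/- arXiv:1703.10641 — 2 statements merged into one kernel-verified Lean document; each statement's English description precedes it below -/
import Mathlib

section
/- Let R be an integral domain of characteristic 0. The R-algebra homomorphism D_F → End_R(S) sending an element z of the formal affine Demazure algebra to its action on S (so X_i acts as the Demazure operator Δ_i) is injective. -/
open scoped Classical
noncomputable section

/-- Truncation (up to degree `N` in each variable) of the double power series
`F(a,b) = Σ_{i,j} c i j • a^i b^j` of a coefficient family `c`, substituted at two
polynomials `a b` in three variables. -/
noncomputable def fglTrunc {R : Type} [CommRing R] (c : ℕ → ℕ → R) (N : ℕ)
    (a b : MvPolynomial (Fin 3) R) : MvPolynomial (Fin 3) R :=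
  ∑ p ∈ Finset.range N ×ˢ Finset.range N, MvPolynomial.C (c p.1 p.2) * a ^ p.1 * b ^ p.2

/-- A one-dimensional commutative formal group law `F(x,y) = Σ_{i,j} c i j x^i y^j`
over `R`, recorded by its coefficients.  Associativity is expressed through
arbitrarily high truncations. -/
structure FormalGroupLaw (R : Type) [CommRing R] where
  c : ℕ → ℕ → R
  c_comm : ∀ i j, c i j = c j i
  c_norm : c 1 0 = 1
  c_zero : ∀ i, i ≠ 1 → c i 0 = 0
  c_assoc : ∀ (N : ℕ) (d : Fin 3 →₀ ℕ), d 0 + d 1 + d 2 < N →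
    MvPolynomial.coeff d
      (fglTrunc c N (fglTrunc c N (MvPolynomial.X 0) (MvPolynomial.X 1)) (MvPolynomial.X 2)) =
    MvPolynomial.coeff d
      (fglTrunc c N (MvPolynomial.X 0) (fglTrunc c N (MvPolynomial.X 1) (MvPolynomial.X 2)))

/-- The whole setting of the paper: a generalized Cartan matrix together with its
root datum and Weyl group `W`, a Demazure lattice `Λ`, a one-dimensional commutative
formal group law `F` over `R`, the formal group algebra `S = R[[Λ]]_F` (presented by
its defining relations together with an `R`-algebra isomorphism with a multivariate
power series ring), the localization `Q` of `S` at the classes `x_α` of all positive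
roots, the twisted group algebra `Q_W = Q ⋊ R[W]` and its action on `Q`. -/
structure DemazureSetup (R : Type) [CommRing R] : Type 1 where
  /-- size of the generalized Cartan matrix -/
  n : ℕ
  /-- the Demazure lattice `Λ` -/
  Λ : Type
  [Λadd : AddCommGroup Λ]
  [Λfree : Module.Free ℤ Λ]
  [Λfin : Module.Finite ℤ Λ]
  /-- the Weyl group -/
  W : Type
  [Wgrp : Group W]
  [Wact : DistribMulAction W Λ]
  /-- the simple reflections -/
  s : Fin n → W
  s_sq : ∀ i, s i * s i = 1
  s_gen : Subgroup.closure (Set.range s) = ⊤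
  /-- the simple roots, viewed inside the Demazure lattice -/
  sroot : Fin n → Λ
  roots_indep : LinearIndependent ℤ sroot
  /-- pairing with the simple coroots: `scoroot i λ = ⟨λ, α_i^∨⟩ ∈ ℤ` -/
  scoroot : Fin n → (Λ →+ ℤ)
  /-- diagonal entries of the generalized Cartan matrix `a_{ii} = ⟨α_i, α_i^∨⟩ = 2` -/
  cartan_diag : ∀ i, scoroot i (sroot i) = 2
  /-- off-diagonal entries `a_{ij} = ⟨α_j, α_i^∨⟩` are nonpositive -/
  cartan_off : ∀ i j, i ≠ j → scoroot i (sroot j) ≤ 0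
  cartan_zero : ∀ i j, scoroot i (sroot j) = 0 ↔ scoroot j (sroot i) = 0
  /-- the simple reflections act by `s_i(λ) = λ - ⟨λ, α_i^∨⟩ α_i` -/
  s_act : ∀ (i : Fin n) (lam : Λ), s i • lam = lam - scoroot i lam • sroot i
  /-- `W` acts faithfully on `Λ` -/
  act_faithful : ∀ w : W, (∀ lam : Λ, w • lam = lam) → w = 1
  /-- every simple root can be extended to a `ℤ`-basis of `Λ` (Demazure lattice) -/
  basis_ext : ∀ i, ∃ (b : Module.Basis (Fin (Module.finrank ℤ Λ)) ℤ Λ) (j : Fin (Module.finrank ℤ Λ)),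
    b j = sroot i
  /-- the formal group law `F` -/
  fgl : FormalGroupLaw R
  /-- the formal group algebra `S = R[[Λ]]_F` -/
  S : Type
  [Scr : CommRing S]
  [Salg : Algebra R S]
  /-- the generators `x_λ`, `λ ∈ Λ`, of the formal group algebra -/
  x : Λ → S
  x_zero : x 0 = 0
  /-- the augmentation map `ε : S → R`, `x_λ ↦ 0` -/
  aug : S →ₐ[R] R
  aug_x : ∀ lam, aug (x lam) = 0
  /-- the defining relation `x_{λ+μ} = F(x_λ, x_μ)`, modulo every power of the
  augmentation ideal -/
  x_add : ∀ (lam mu : Λ) (N : ℕ),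
    x (lam + mu) - ∑ p ∈ Finset.range N ×ˢ Finset.range N,
      algebraMap R S (fgl.c p.1 p.2) * x lam ^ p.1 * x mu ^ p.2
    ∈ RingHom.ker aug.toRingHom ^ N
  /-- a `ℤ`-basis of `Λ` -/
  e : Module.Basis (Fin (Module.finrank ℤ Λ)) ℤ Λ
  /-- `S` is the power series ring on the `x`-classes of a basis of `Λ` -/
  ψ : S ≃ₐ[R] MvPowerSeries (Fin (Module.finrank ℤ Λ)) R
  ψ_x : ∀ j, ψ (x (e j)) = MvPowerSeries.X j
  aug_ψ : ∀ a : S, aug a = MvPowerSeries.constantCoeff (σ := Fin (Module.finrank ℤ Λ)) (R := R) (ψ a)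
  /-- the `W`-action on `S` induced by `w(x_λ) = x_{w(λ)}` -/
  [SWact : MulSemiringAction W S]
  smul_x : ∀ (w : W) (lam : Λ), w • x lam = x (w • lam)
  smul_algebraMap : ∀ (w : W) (r : R), w • (algebraMap R S r) = algebraMap R S r
  smul_IF : ∀ (w : W) (N : ℕ) (a : S),
    a ∈ RingHom.ker aug.toRingHom ^ N → w • a ∈ RingHom.ker aug.toRingHom ^ N
  /-- the localization `Q = S[1/x_α : α ∈ Φ₊]` -/
  Q : Type
  [Qcr : CommRing Q]
  [Qalg : Algebra S Q]
  loc : IsLocalization (Submonoid.closure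
    (x '' {v | (∃ (w : W) (i : Fin n), v = w • sroot i) ∧
               v ∈ (AddSubmonoid.closure (Set.range sroot) : AddSubmonoid Λ)})) Q
  /-- the induced `W`-action on `Q` -/
  [QWact : MulSemiringAction W Q]
  smul_SQ : ∀ (w : W) (a : S), w • (algebraMap S Q a) = algebraMap S Q (w • a)
  /-- the twisted group algebra `Q_W = Q ⋊_R R[W]` -/
  QW : Type
  [QWring : Ring QW]
  [QWalg : Algebra R QW]
  /-- the canonical inclusion `Q → Q_W`, `q ↦ q δ_e` -/
  ι : Q →+* QW
  /-- the canonical basis elements `δ_w` of `Q_W` -/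
  δ : W →* QW
  ι_alg : ∀ r : R, ι (algebraMap S Q (algebraMap R S r)) = algebraMap R QW r
  /-- the twisted commutation rule `δ_w · q = w(q) · δ_w` -/
  twist : ∀ (w : W) (q : Q), δ w * ι q = ι (w • q) * δ w
  /-- `Q_W` is a free left `Q`-module with basis `{δ_w}_{w ∈ W}` -/
  qw_free : ∀ z : QW, ∃! c : W →₀ Q, z = c.sum fun w q => ι q * δ w
  /-- the action of `Q_W` on `Q`, `(q δ_w) · q' = q · w(q')` -/
  act : QW → Q → Q
  act_addl : ∀ (z z' : QW) (q : Q), act (z + z') q = act z q + act z' q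
  act_spec : ∀ (q : Q) (w : W) (q' : Q), act (ι q * δ w) q' = q * (w • q')

namespace DemazureSetup

attribute [instance] Λadd Λfree Λfin Wgrp Wact Scr Salg SWact Qcr Qalg QWact QWring QWalg

variable {R : Type} [CommRing R] (D : DemazureSetup R)

/-- the set `Φ` of (real) roots -/
def roots : Set D.Λ := {v | ∃ (w : D.W) (i : Fin D.n), v = w • D.sroot i}

/-- the set `Φ₊` of positive roots -/
def posRoots : Set D.Λ :=
  {v | (∃ (w : D.W) (i : Fin D.n), v = w • D.sroot i) ∧
       v ∈ (AddSubmonoid.closure (Set.range D.sroot) : AddSubmonoid D.Λ)}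

/-- the set `Φ₋ = -Φ₊` of negative roots -/
def negRoots : Set D.Λ := {v | -v ∈ D.posRoots}

/-- the reflection `s_α ∈ W` associated to a real root `α` -/
def refl (v : D.Λ) : D.W :=
  if h : v ∈ D.roots then h.choose * D.s h.choose_spec.choose * h.choose⁻¹ else 1

/-- the product `s_{i_1} ⋯ s_{i_l}` of a word in the simple reflections -/
def wordProd (ω : List (Fin D.n)) : D.W := (ω.map D.s).prod

/-- the Coxeter length function on `W` -/
def len (w : D.W) : ℕ := sInf {l | ∃ ω : List (Fin D.n), ω.length = l ∧ D.wordProd ω = w}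

/-- `ω` is a reduced word for `w` -/
def IsReduced (w : D.W) (ω : List (Fin D.n)) : Prop :=
  D.wordProd ω = w ∧ ω.length = D.len w

/-- a choice of a reduced word `I_w` for every `w ∈ W` -/
def IsRedSystem (I : D.W → List (Fin D.n)) : Prop := ∀ w, D.IsReduced w (I w)

/-- the Bruhat order on `W` (subword characterization) -/
def bruhatLE (u w : D.W) : Prop :=
  ∃ ω ω' : List (Fin D.n), D.IsReduced w ω ∧ ω'.Sublist ω ∧ D.wordProd ω' = u

def bruhatLT (u w : D.W) : Prop := D.bruhatLE u w ∧ u ≠ w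

/-- the inversion set `Φ_w = {α ∈ Φ₊ : w⁻¹(α) ∈ Φ₋}` -/
def invSet (w : D.W) : Set D.Λ := {v | v ∈ D.posRoots ∧ w⁻¹ • v ∈ D.negRoots}

/-- the augmentation ideal `I_F = ker ε ⊂ S` -/
def IF : Ideal D.S := RingHom.ker D.aug.toRingHom

/-- the element `c_v = Π_{α ∈ Φ_v} x_α ∈ S` -/
def cElt (v : D.W) : D.S := ∏ᶠ a ∈ D.invSet v, D.x a

/-- the image of `x_λ` in the localization `Q` -/
def xQ (v : D.Λ) : D.Q := algebraMap D.S D.Q (D.x v)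

/-- the image of `a ∈ S` in the twisted group algebra `Q_W` -/
def SQW (a : D.S) : D.QW := D.ι (algebraMap D.S D.Q a)

/-- the formal Demazure element `X_α = (1/x_α)(1 - δ_{s_α}) ∈ Q_W` -/
def Xel (v : D.Λ) : D.QW := D.ι (Ring.inverse (D.xQ v)) * (1 - D.δ (D.refl v))

/-- the formal push-pull element `Y_α = 1/x_{-α} + (1/x_α) δ_{s_α} ∈ Q_W` -/
def Yel (v : D.Λ) : D.QW := D.ι (Ring.inverse (D.xQ (-v))) + D.ι (Ring.inverse (D.xQ v)) * D.δ (D.refl v)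

/-- `X_i = X_{α_i}` -/
def Xi (i : Fin D.n) : D.QW := D.Xel (D.sroot i)

/-- `Y_i = Y_{α_i}` -/
def Yi (i : Fin D.n) : D.QW := D.Yel (D.sroot i)

/-- `X_I = X_{i_1} ⋯ X_{i_l}` for a word `I = (i_1, …, i_l)` -/
def Xword (ω : List (Fin D.n)) : D.QW := (ω.map D.Xi).prod

/-- `Y_I = Y_{i_1} ⋯ Y_{i_l}` for a word `I = (i_1, …, i_l)` -/
def Yword (ω : List (Fin D.n)) : D.QW := (ω.map D.Yi).prod

/-- the formal affine Demazure algebra `D_F`: the `R`-subalgebra of `Q_W` generated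
by `S` and the elements `X_α`, `α ∈ Φ` -/
def DF : Subalgebra R D.QW :=
  Algebra.adjoin R (Set.range D.SQW ∪ D.Xel '' D.roots)

/-- `z · S ⊆ S` for `z ∈ Q_W` -/
def PreservesS (z : D.QW) : Prop :=
  ∀ a : D.S, ∃ b : D.S, D.act z (algebraMap D.S D.Q a) = algebraMap D.S D.Q b

end DemazureSetup

end

/-!
`Q_W` is a free `Q`-module on the `δ_w`, and `Σ q_w δ_w` acts on `S` by
`a ↦ Σ q_w · w(a)`.  The maps `a ↦ w(a)` are multiplicative maps `S → Q`, pairwise distinct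
because `W` acts faithfully on `Λ` and `λ ↦ x_λ` is injective in characteristic `0` (the
linear part of `x_λ` recovers the coordinates of `λ`).  By Dedekind's independence of
characters into the domain `Q` the coefficients `q_w` are determined by the action, even for
all of `Q_W`.
-/

theorem FormalGroupLaw.sum_range_two_mul {R A : Type} [CommRing R] [CommRing A] [Algebra R A]
    (F : FormalGroupLaw R) (a b : A) :
    ∑ p ∈ Finset.range 2 ×ˢ Finset.range 2, algebraMap R A (F.c p.1 p.2) * a ^ p.1 * b ^ p.2 =
      a + b + algebraMap R A (F.c 1 1) * a * b := by
  have hc01 : F.c 0 1 = 1 := (F.c_comm 0 1).trans F.c_norm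
  simp only [Finset.sum_product, Finset.sum_range_succ, Finset.sum_range_zero, pow_zero, pow_one,
    F.c_zero 0 zero_ne_one, hc01, F.c_norm, map_zero, map_one]
  ring

namespace DemazureSetup

variable {R : Type} [CommRing R] (D : DemazureSetup R)

noncomputable def linCoeff (j : Fin (Module.finrank ℤ D.Λ)) : D.S →ₗ[R] R :=
  MvPowerSeries.coeff (Finsupp.single j 1) ∘ₗ D.ψ.toLinearMap

theorem linCoeff_apply (j : Fin (Module.finrank ℤ D.Λ)) (a : D.S) :
    D.linCoeff j a = MvPowerSeries.coeff (Finsupp.single j 1) (D.ψ a) := rfl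

theorem one_le_order_ψ {a : D.S} (ha : a ∈ D.IF) : 1 ≤ (D.ψ a).order := by
  rw [MvPowerSeries.one_le_order_iff_constCoeff_eq_zero, ← D.aug_ψ]
  exact ha

theorem linCoeff_mul_eq_zero (j : Fin (Module.finrank ℤ D.Λ)) {a b : D.S}
    (ha : a ∈ D.IF) (hb : b ∈ D.IF) : D.linCoeff j (a * b) = 0 := by
  rw [linCoeff_apply, map_mul]
  apply MvPowerSeries.coeff_of_lt_order
  calc (((Finsupp.single j 1).degree : ℕ) : ℕ∞) = 1 := by simp
    _ < 1 + 1 := by norm_num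
    _ ≤ (D.ψ a).order + (D.ψ b).order := add_le_add (D.one_le_order_ψ ha) (D.one_le_order_ψ hb)
    _ ≤ _ := MvPowerSeries.le_order_mul

theorem linCoeff_eq_zero_of_mem_IF_sq (j : Fin (Module.finrank ℤ D.Λ)) {a : D.S}
    (ha : a ∈ D.IF ^ 2) : D.linCoeff j a = 0 := by
  rw [pow_two] at ha
  exact Submodule.mul_induction_on ha (fun _ hx _ hy => D.linCoeff_mul_eq_zero j hx hy)
    fun _ _ hx hy => by rw [map_add, hx, hy, add_zero]

theorem x_mem_IF (lam : D.Λ) : D.x lam ∈ D.IF := D.aug_x lam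

theorem linCoeff_x_add (j : Fin (Module.finrank ℤ D.Λ)) (lam mu : D.Λ) :
    D.linCoeff j (D.x (lam + mu)) = D.linCoeff j (D.x lam) + D.linCoeff j (D.x mu) := by
  have hquad := D.x_add lam mu 2
  rw [FormalGroupLaw.sum_range_two_mul] at hquad
  have hprod : D.linCoeff j (algebraMap R D.S (D.fgl.c 1 1) * D.x lam * D.x mu) = 0 :=
    D.linCoeff_mul_eq_zero j (Ideal.mul_mem_left _ _ (D.x_mem_IF lam)) (D.x_mem_IF mu)
  have hdiff := D.linCoeff_eq_zero_of_mem_IF_sq j hquad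
  rwa [map_sub, map_add, map_add, hprod, add_zero, sub_eq_zero] at hdiff

theorem linCoeff_x_basis (j i : Fin (Module.finrank ℤ D.Λ)) :
    D.linCoeff j (D.x (D.e i)) = Finsupp.single j 1 i := by
  classical
  rw [linCoeff_apply, D.ψ_x i, MvPowerSeries.coeff_index_single_X, Finsupp.single_apply]

theorem linCoeff_x_eq_repr (j : Fin (Module.finrank ℤ D.Λ)) (lam : D.Λ) :
    D.linCoeff j (D.x lam) = (D.e.repr lam j : R) := by
  let f : D.Λ →+ R := AddMonoidHom.mk' (fun lam => D.linCoeff j (D.x lam)) (D.linCoeff_x_add j)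
  let g : D.Λ →+ R :=
    (Int.castAddHom R).comp ((Finsupp.applyAddHom j).comp D.e.repr.toAddMonoidHom)
  have hfg : f.toIntLinearMap = g.toIntLinearMap :=
    D.e.ext fun i => by simp [f, g, linCoeff_x_basis, Finsupp.single_apply, eq_comm]
  exact LinearMap.congr_fun hfg lam

theorem x_injective [CharZero R] : Function.Injective D.x := fun lam mu h =>
  D.e.repr.injective <| Finsupp.ext fun j => by
    simpa only [linCoeff_x_eq_repr, Int.cast_inj] using congrArg (D.linCoeff j) h

theorem isDomain_S [IsDomain R] : IsDomain D.S :=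
  have := NoZeroDivisors.to_isDomain (MvPowerSeries (Fin (Module.finrank ℤ D.Λ)) R)
  MulEquiv.isDomain _ D.ψ.toRingEquiv.toMulEquiv

theorem x_root_mem_nonZeroDivisors [IsDomain R] [CharZero R] {v : D.Λ} (hv : v ∈ D.roots) :
    D.x v ∈ nonZeroDivisors D.S := by
  have := D.isDomain_S
  obtain ⟨w, i, rfl⟩ := hv
  refine mem_nonZeroDivisors_of_ne_zero fun hx => D.roots_indep.ne_zero i ?_
  rw [← D.x_zero] at hx
  exact (smul_eq_zero_iff_eq w).mp (D.x_injective hx)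

theorem locSubmonoid_le_nonZeroDivisors [IsDomain R] [CharZero R] :
    Submonoid.closure (D.x '' D.posRoots) ≤ nonZeroDivisors D.S :=
  Submonoid.closure_le.mpr <| by
    rintro _ ⟨v, hv, rfl⟩
    exact D.x_root_mem_nonZeroDivisors hv.1

theorem isDomain_Q [IsDomain R] [CharZero R] : IsDomain D.Q :=
  have := D.isDomain_S
  have : IsLocalization (Submonoid.closure (D.x '' D.posRoots)) D.Q := D.loc
  IsLocalization.isDomain_of_le_nonZeroDivisors D.Q D.locSubmonoid_le_nonZeroDivisors

theorem algebraMap_S_Q_injective [IsDomain R] [CharZero R] :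
    Function.Injective (algebraMap D.S D.Q) :=
  have : IsLocalization (Submonoid.closure (D.x '' D.posRoots)) D.Q := D.loc
  IsLocalization.injective D.Q D.locSubmonoid_le_nonZeroDivisors

def weylChar (w : D.W) : D.S →* D.Q :=
  (algebraMap D.S D.Q).toMonoidHom.comp (MulSemiringAction.toRingHom D.W D.S w).toMonoidHom

theorem weylChar_apply (w : D.W) (a : D.S) : D.weylChar w a = algebraMap D.S D.Q (w • a) := rfl

theorem weylChar_injective [IsDomain R] [CharZero R] : Function.Injective D.weylChar := by
  intro w w' h
  have hfix : ∀ lam : D.Λ, (w'⁻¹ * w) • lam = lam := fun lam => by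
    have := DFunLike.congr_fun h (D.x lam)
    rw [weylChar_apply, weylChar_apply, D.smul_x, D.smul_x] at this
    rw [mul_smul, D.x_injective (D.algebraMap_S_Q_injective this), inv_smul_smul]
  exact (inv_mul_eq_one.mp (D.act_faithful _ hfix)).symm

theorem linearIndependent_weylChar [IsDomain R] [CharZero R] :
    LinearIndependent D.Q fun w => ⇑(D.weylChar w) :=
  have := D.isDomain_Q
  (linearIndependent_monoidHom D.S D.Q).comp _ D.weylChar_injective

theorem act_zero (q : D.Q) : D.act 0 q = 0 := by
  simpa using D.act_addl 0 0 q

theorem act_sum (c : D.W →₀ D.Q) (a : D.S) :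
    D.act (c.sum fun w q => D.ι q * D.δ w) (algebraMap D.S D.Q a) =
      Finsupp.linearCombination D.Q (fun w => ⇑(D.weylChar w)) c a := by
  classical
  rw [Finsupp.linearCombination_apply, Finsupp.sum, Finsupp.sum, Finset.sum_apply]
  induction c.support using Finset.induction with
  | empty => exact D.act_zero _
  | insert w T hw ih =>
    rw [Finset.sum_insert hw, Finset.sum_insert hw, D.act_addl, D.act_spec, ih, D.smul_SQ]
    rfl

end DemazureSetup

/-- **Corollary 4.8**:  over an integral domain `R` of characteristic `0`, the
`R`-algebra homomorphism `D_F → End_R(S)` given by the action of `D_F` on `S`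
(so that `X_i` acts as the Demazure operator `Δ_i`) is injective:  two elements of
`D_F` inducing the same operator on `S` are equal. -/
theorem DF_to_End_injective
    {R : Type} [CommRing R] [IsDomain R] [CharZero R] (D : DemazureSetup R) :
    ∀ z ∈ D.DF, ∀ z' ∈ D.DF,
      (∀ a : D.S, D.act z (algebraMap D.S D.Q a) = D.act z' (algebraMap D.S D.Q a)) →
      z = z' := by
  intro z _ z' _ hact
  obtain ⟨c, rfl, -⟩ := D.qw_free z
  obtain ⟨c', rfl, -⟩ := D.qw_free z'
  have hcomb : Finsupp.linearCombination D.Q (fun w => ⇑(D.weylChar w)) c =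
      Finsupp.linearCombination D.Q (fun w => ⇑(D.weylChar w)) c' :=
    funext fun a => by simpa only [D.act_sum] using hact a
  rw [D.linearIndependent_weylChar hcomb]
end

section
/- For each w ∈ W fix a reduced word I_w and set X_{I_w} = X_{i_1}⋯X_{i_l} and Y_{I_w} = Y_{i_1}⋯Y_{i_l}. Then both {X_{I_w}}_{w∈W} and {Y_{I_w}}_{w∈W} are bases of Q_W as a left Q-module. -/
open scoped Classical
/-!
Write `X_i = -(1/x_{α_i}) δ_{s_i} + 1/x_{α_i}` and `Y_i = (1/x_{α_i}) δ_{s_i} + 1/x_{-α_i}`.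
Multiplying out along a reduced word of `w`, and moving the coefficients to the left with
`δ_v q = v(q) δ_v`, the product is a unit times `δ_w` plus a `Q`-combination of `δ_v` with
`ℓ(v) < ℓ(w)`. Such a family is unitriangular with respect to the basis `{δ_w}` ordered by
length, hence is again a basis.

This needs `s_{α_i} = s_i`, where `s_{α_i} = u s_j u⁻¹` comes from an arbitrary presentation
`α_i = u(α_j)`. The element `s_i u s_j u⁻¹` acts as a transvection `λ ↦ λ + f(λ) α_i`, and
it is trivial because every root is a nonnegative or a nonpositive combination of simple roots.
That in turn is the classical statement `ℓ(w s_i) ≥ ℓ(w) → w(α_i) ≥ 0`, proved by induction on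
`ℓ(w)` after splitting off a factor in the rank-two subgroup `⟨s_i, s_j⟩`. In rank two the
orbit of `α_i` is computed explicitly: when `a_{ij} a_{ji} ≥ 4` its coordinates never change
sign, and otherwise a braid relation of length `2, 3, 4, 6` cuts the orbit off first.
-/
section Triangular

open Submodule

variable {ι K M : Type*} [Ring K] [AddCommGroup M] [Module K M] (b : Module.Basis ι K M)
  (ℓ : ι → ℕ) {f : ι → M}

theorem Module.Basis.linearIndependent_of_triangular
    (hf : ∀ i, ∃ u : K, IsUnit u ∧ f i - u • b i ∈ span K (b '' {j | ℓ j < ℓ i})) :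
    LinearIndependent K f := by
  choose u hu hr using hf
  have hcoord : ∀ i i₀, ℓ i ≤ ℓ i₀ → b.repr (f i) i₀ = u i * Finsupp.single i 1 i₀ := by
    intro i i₀ hle
    have hz : b.repr (f i - u i • b i) i₀ = 0 :=
      Finsupp.notMem_support_iff.mp fun h => hle.not_gt (b.mem_span_image.mp (hr i) h)
    rwa [map_sub, map_smul, Finsupp.sub_apply, sub_eq_zero, b.repr_self] at hz
  rw [LinearIndependent, ← LinearMap.ker_eq_bot, LinearMap.ker_eq_bot']
  intro c hc
  by_contra hne
  obtain ⟨i₀, hi₀, hmax⟩ := Finset.exists_max_image c.support ℓ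
    (Finsupp.support_nonempty_iff.mpr hne)
  have : b.repr (Finsupp.linearCombination K f c) i₀ = c i₀ * u i₀ := by
    rw [Finsupp.linearCombination_apply, Finsupp.sum, map_sum, Finset.sum_apply',
      Finset.sum_eq_single i₀ (fun i hi hne => ?_) (fun h => absurd hi₀ h)]
    · simp [hcoord i₀ i₀ le_rfl]
    · simp [hcoord i i₀ (hmax i hi), Finsupp.single_eq_of_ne hne.symm]
  rw [hc, map_zero, Finsupp.zero_apply, eq_comm, (hu i₀).mul_left_eq_zero] at this
  exact Finsupp.mem_support_iff.mp hi₀ this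

theorem Module.Basis.span_range_eq_top_of_triangular
    (hf : ∀ i, ∃ u : K, IsUnit u ∧ f i - u • b i ∈ span K (b '' {j | ℓ j < ℓ i})) :
    span K (Set.range f) = ⊤ := by
  choose u hu hr using hf
  have hb : ∀ n i, ℓ i = n → b i ∈ span K (Set.range f) := by
    intro n
    induction n using Nat.strong_induction_on with
    | _ n ih =>
      rintro i rfl
      have hlow : f i - u i • b i ∈ span K (Set.range f) :=
        span_le.mpr (by rintro _ ⟨j, hj, rfl⟩; exact ih _ hj j rfl) (hr i)
      have : b i = (hu i).unit⁻¹.val • (f i - (f i - u i • b i)) := by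
        rw [sub_sub_cancel, smul_smul, IsUnit.val_inv_mul, one_smul]
      rw [this]
      exact smul_mem _ _ (sub_mem (subset_span ⟨i, rfl⟩) hlow)
  rw [eq_top_iff, ← b.span_eq, span_le]
  rintro _ ⟨i, rfl⟩
  exact hb _ i rfl

end Triangular

namespace DemazureSetup

/-- The alternating word of length `m` in the letters `true`, `false` ending in `b`. -/
def altWord (b : Bool) : ℕ → List Bool
  | 0 => []
  | m + 1 => (b ^^ m.bodd) :: altWord b m

lemma altWord_length (b : Bool) (m : ℕ) : (altWord b m).length = m := by
  induction m with
  | zero => rfl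
  | succ m ih => simp [altWord, ih]

lemma altWord_succ (b : Bool) (m : ℕ) : altWord b (m + 1) = altWord (!b) m ++ [b] := by
  induction m generalizing b with
  | zero => simp [altWord]
  | succ m ih => rw [altWord, ih, altWord, Nat.bodd_succ]; cases b <;> simp

lemma exists_altWord_add (b : Bool) (k m : ℕ) : ∃ τ, altWord b (k + m) = τ ++ altWord b m := by
  induction k with
  | zero => exact ⟨[], by simp⟩
  | succ k ih =>
    obtain ⟨τ, hτ⟩ := ih
    exact ⟨_ :: τ, by rw [Nat.add_right_comm, altWord, hτ, List.cons_append]⟩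

lemma eq_altWord_of_isChain {σ : List Bool} (h : σ.IsChain (· ≠ ·)) :
    ∃ b, σ = altWord b σ.length := by
  induction σ with
  | nil => exact ⟨false, rfl⟩
  | cons x τ ih =>
    cases τ with
    | nil => exact ⟨x, by cases x <;> rfl⟩
    | cons y τ =>
      rw [List.isChain_cons_cons] at h
      obtain ⟨b, hb⟩ := ih h.2
      refine ⟨b, ?_⟩
      rw [List.length_cons, altWord, ← hb, List.length_cons, Nat.bodd_succ]
      rw [List.length_cons, altWord, List.cons.injEq] at hb
      have hx := hb.1 ▸ h.1
      congr 1
      revert hx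
      cases x <;> cases b <;> cases τ.length.bodd <;> decide

/-- The coordinates in the basis `α_i, α_j` of `(⋯ s_j s_i s_j)(α_i)`, the alternating product
having `m` factors, where `a = -⟨α_j, α_i^∨⟩` and `b = -⟨α_i, α_j^∨⟩`. -/
def dihedralCoords (a b : ℤ) : ℕ → ℤ × ℤ
  | 0 => (1, 0)
  | m + 1 =>
    if m.bodd then
      (a * (dihedralCoords a b m).2 - (dihedralCoords a b m).1, (dihedralCoords a b m).2)
    else ((dihedralCoords a b m).1, b * (dihedralCoords a b m).1 - (dihedralCoords a b m).2)

lemma dihedralCoords_nonneg {a b : ℤ} (ha : 0 ≤ a) (hb : 0 ≤ b) (hab : 4 ≤ a * b) (m : ℕ) :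
    0 ≤ (dihedralCoords a b m).1 ∧ 0 ≤ (dihedralCoords a b m).2 := by
  -- as `a b ≥ 4`, each reflection preserves the domination of the coordinate it changes next
  suffices ∀ m, 0 ≤ (dihedralCoords a b m).1 ∧ 0 ≤ (dihedralCoords a b m).2 ∧
      if m.bodd then 2 * (dihedralCoords a b m).1 ≤ a * (dihedralCoords a b m).2
      else 2 * (dihedralCoords a b m).2 ≤ b * (dihedralCoords a b m).1 from
    ⟨(this m).1, (this m).2.1⟩
  intro m
  induction m with
  | zero => simp [dihedralCoords, hb]
  | succ m ih =>
    obtain ⟨hp, hq, hinv⟩ := ih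
    rw [dihedralCoords, Nat.bodd_succ]
    cases hm : m.bodd <;> simp only [hm, if_true, Bool.not_false, Bool.not_true,
      Bool.false_eq_true, if_false] at hinv ⊢ <;> refine ⟨?_, ?_, ?_⟩ <;>
      nlinarith [mul_le_mul_of_nonneg_left hinv ha, mul_le_mul_of_nonneg_left hinv hb,
        mul_le_mul_of_nonneg_right hab hp, mul_le_mul_of_nonneg_right hab hq]

variable {R : Type} [CommRing R] (D : DemazureSetup R)

section Length

lemma wordProd_cons (i : Fin D.n) (ω : List (Fin D.n)) :
    D.wordProd (i :: ω) = D.s i * D.wordProd ω := by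
  simp [wordProd]

lemma wordProd_append (σ τ : List (Fin D.n)) :
    D.wordProd (σ ++ τ) = D.wordProd σ * D.wordProd τ := by
  simp [wordProd]

lemma s_mul_s (i : Fin D.n) (w : D.W) : D.s i * (D.s i * w) = w := by
  rw [← mul_assoc, D.s_sq, one_mul]

lemma mul_s_mul_s (w : D.W) (i : Fin D.n) : w * D.s i * D.s i = w := by
  rw [mul_assoc, D.s_sq, mul_one]

lemma wordProd_reverse (σ : List (Fin D.n)) :
    D.wordProd σ.reverse = (D.wordProd σ)⁻¹ := by
  induction σ with
  | nil => simp [wordProd]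
  | cons i σ ih =>
    rw [List.reverse_cons, wordProd_append, ih, D.wordProd_cons i σ, mul_inv_rev]
    simp [wordProd, inv_eq_of_mul_eq_one_right (D.s_sq i)]

lemma exists_wordProd_eq (w : D.W) : ∃ ω : List (Fin D.n), D.wordProd ω = w := by
  have hw : w ∈ Subgroup.closure (Set.range D.s) := D.s_gen ▸ Subgroup.mem_top w
  induction hw using Subgroup.closure_induction with
  | mem _ hx => obtain ⟨i, rfl⟩ := hx; exact ⟨[i], by simp [wordProd]⟩
  | one => exact ⟨[], rfl⟩
  | mul _ _ _ _ ihx ihy =>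
    obtain ⟨σ, rfl⟩ := ihx; obtain ⟨τ, rfl⟩ := ihy
    exact ⟨σ ++ τ, D.wordProd_append σ τ⟩
  | inv _ _ ih => obtain ⟨σ, rfl⟩ := ih; exact ⟨σ.reverse, D.wordProd_reverse σ⟩

lemma exists_reduced (w : D.W) : ∃ ω, D.IsReduced w ω := by
  obtain ⟨ω, hω⟩ := D.exists_wordProd_eq w
  obtain ⟨ω', hl, hp⟩ := Nat.sInf_mem (s := {l | ∃ ω : List (Fin D.n), ω.length = l ∧
    D.wordProd ω = w}) ⟨ω.length, ω, rfl, hω⟩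
  exact ⟨ω', hp, hl⟩

lemma len_le_length {w : D.W} {ω : List (Fin D.n)} (h : D.wordProd ω = w) :
    D.len w ≤ ω.length :=
  Nat.sInf_le ⟨ω, rfl, h⟩

lemma len_s_mul_le (i : Fin D.n) (w : D.W) : D.len (D.s i * w) ≤ D.len w + 1 := by
  obtain ⟨ω, hp, hl⟩ := D.exists_reduced w
  simpa [hl] using D.len_le_length (ω := i :: ω) (by rw [wordProd_cons, hp])

lemma exists_len_mul_s_lt {w : D.W} (hw : w ≠ 1) : ∃ j, D.len (w * D.s j) < D.len w := by
  obtain ⟨ω, hp, hl⟩ := D.exists_reduced w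
  rcases List.eq_nil_or_concat ω with rfl | ⟨σ, j, rfl⟩
  · exact absurd hp.symm hw
  refine ⟨j, ?_⟩
  have : D.wordProd σ = w * D.s j := by
    rw [← hp, List.concat_eq_append, wordProd_append, mul_assoc]
    simp [wordProd, D.s_sq]
  have := D.len_le_length this
  simp only [List.concat_eq_append, List.length_append, List.length_singleton] at hl
  omega

end Length

def posCone : AddSubmonoid D.Λ := AddSubmonoid.closure (Set.range D.sroot)

section PosCone

lemma sroot_mem_posCone (i : Fin D.n) : D.sroot i ∈ D.posCone :=
  AddSubmonoid.subset_closure ⟨i, rfl⟩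

lemma zsmul_mem_posCone {v : D.Λ} (hv : v ∈ D.posCone) {c : ℤ} (hc : 0 ≤ c) :
    c • v ∈ D.posCone := by
  lift c to ℕ using hc
  rw [natCast_zsmul]
  exact AddSubmonoid.nsmul_mem _ hv c

lemma exists_sum_of_mem_posCone {v : D.Λ} (hv : v ∈ D.posCone) :
    ∃ c : Fin D.n → ℕ, v = ∑ k, c k • D.sroot k := by
  induction hv using AddSubmonoid.closure_induction with
  | mem _ hx =>
    obtain ⟨i, rfl⟩ := hx
    exact ⟨Pi.single i 1, by simp [Pi.single_apply]⟩
  | zero => exact ⟨0, by simp⟩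
  | add _ _ _ _ ihx ihy =>
    obtain ⟨c, rfl⟩ := ihx; obtain ⟨c', rfl⟩ := ihy
    exact ⟨c + c', by simp [add_smul, Finset.sum_add_distrib]⟩

lemma coeff_nonneg_of_sum_mem_posCone {c : Fin D.n → ℤ}
    (h : ∑ k, c k • D.sroot k ∈ D.posCone) (k : Fin D.n) : 0 ≤ c k := by
  obtain ⟨m, hm⟩ := D.exists_sum_of_mem_posCone h
  have hsub : ∑ r, (c r - m r) • D.sroot r = 0 := by
    simp only [sub_smul, Finset.sum_sub_distrib, hm, natCast_zsmul, sub_self]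
  have := Fintype.linearIndependent_iff.mp D.roots_indep _ hsub k
  omega

lemma nonneg_of_add_smul_sroot_mem {k i : Fin D.n} (hki : k ≠ i) {c : ℤ}
    (h : D.sroot k + c • D.sroot i ∈ D.posCone ∨ -(D.sroot k + c • D.sroot i) ∈ D.posCone) :
    0 ≤ c := by
  have hsum : ∀ z₁ z₂ : ℤ, z₁ • D.sroot k + z₂ • D.sroot i
      = ∑ r, ((Pi.single k z₁ : Fin D.n → ℤ) r + (Pi.single i z₂ : Fin D.n → ℤ) r)
        • D.sroot r := by
    intro z₁ z₂
    simp [add_smul, Finset.sum_add_distrib, Pi.single_apply]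
  rcases h with h | h
  · rw [← one_smul ℤ (D.sroot k), hsum] at h
    simpa [hki.symm] using D.coeff_nonneg_of_sum_mem_posCone h i
  · rw [neg_add, ← neg_one_smul ℤ (D.sroot k), ← neg_smul, hsum] at h
    simpa [hki] using D.coeff_nonneg_of_sum_mem_posCone h k

end PosCone

lemma eq_of_forall_smul_eq {u v : D.W} (h : ∀ lam : D.Λ, u • lam = v • lam) : u = v := by
  refine (inv_mul_eq_one.mp (D.act_faithful _ fun lam => ?_)).symm
  rw [mul_smul, h, inv_smul_smul]

lemma s_smul_sroot (i : Fin D.n) : D.s i • D.sroot i = -D.sroot i := by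
  rw [D.s_act, D.cartan_diag]
  module

section Dihedral

variable (i j : Fin D.n)

noncomputable def dihedralProd (σ : List Bool) : D.W :=
  D.wordProd (σ.map fun e => if e then i else j)

noncomputable def dihedralLen (d : D.W) : ℕ :=
  sInf {m | ∃ σ : List Bool, σ.length = m ∧ D.dihedralProd i j σ = d}

lemma dihedralProd_cons (e : Bool) (σ : List Bool) :
    D.dihedralProd i j (e :: σ) = D.s (if e then i else j) * D.dihedralProd i j σ := by
  simp [dihedralProd, wordProd]

lemma dihedralProd_append (σ τ : List Bool) :
    D.dihedralProd i j (σ ++ τ) = D.dihedralProd i j σ * D.dihedralProd i j τ := by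
  simp [dihedralProd, wordProd]

lemma dihedralProd_true : D.dihedralProd i j [true] = D.s i := by
  simp [dihedralProd, wordProd]

lemma dihedralLen_le (σ : List Bool) : D.dihedralLen i j (D.dihedralProd i j σ) ≤ σ.length :=
  Nat.sInf_le ⟨σ, rfl, rfl⟩

lemma exists_length_eq_dihedralLen (σ : List Bool) :
    ∃ τ : List Bool, τ.length = D.dihedralLen i j (D.dihedralProd i j σ) ∧
      D.dihedralProd i j τ = D.dihedralProd i j σ :=
  Nat.sInf_mem (s := {m | ∃ τ : List Bool, τ.length = m ∧ D.dihedralProd i j τ = _})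
    ⟨σ.length, σ, rfl, rfl⟩

lemma exists_shorter_of_not_isChain {σ : List Bool} (h : ¬σ.IsChain (· ≠ ·)) :
    ∃ τ : List Bool, τ.length + 2 ≤ σ.length ∧ D.dihedralProd i j τ = D.dihedralProd i j σ := by
  induction σ with
  | nil => exact absurd List.isChain_nil h
  | cons x σ ih =>
    cases σ with
    | nil => exact absurd (List.isChain_singleton x) h
    | cons y τ =>
      by_cases hxy : x = y
      · subst hxy
        exact ⟨τ, by simp, by rw [dihedralProd_cons, dihedralProd_cons, s_mul_s]⟩
      · obtain ⟨τ', hl, hp⟩ := ih fun hc => h (List.isChain_cons_cons.mpr ⟨hxy, hc⟩)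
        exact ⟨x :: τ', by simpa using hl,
          by rw [dihedralProd_cons, D.dihedralProd_cons i j x, hp]⟩

lemma isChain_of_length_eq_dihedralLen {σ : List Bool}
    (hσ : σ.length = D.dihedralLen i j (D.dihedralProd i j σ)) : σ.IsChain (· ≠ ·) := by
  by_contra h
  obtain ⟨τ, hl, hp⟩ := D.exists_shorter_of_not_isChain i j h
  have := D.dihedralLen_le i j τ
  rw [hp] at this
  omega

lemma dihedralLen_mul_s_lt {τ : List Bool}
    (hτ : τ.length + 1 = D.dihedralLen i j (D.dihedralProd i j (τ ++ [true]))) :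
    D.dihedralLen i j (D.dihedralProd i j (τ ++ [true]) * D.s i)
      < D.dihedralLen i j (D.dihedralProd i j (τ ++ [true])) := by
  calc D.dihedralLen i j (D.dihedralProd i j (τ ++ [true]) * D.s i)
      = D.dihedralLen i j (D.dihedralProd i j τ) := by
        rw [dihedralProd_append, dihedralProd_true, mul_s_mul_s]
    _ ≤ τ.length := D.dihedralLen_le i j τ
    _ < _ := by omega

lemma dihedralProd_altWord_smul (m : ℕ) :
    D.dihedralProd i j (altWord false m) • D.sroot i =
      (dihedralCoords (-D.scoroot i (D.sroot j)) (-D.scoroot j (D.sroot i)) m).1 • D.sroot i +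
      (dihedralCoords (-D.scoroot i (D.sroot j)) (-D.scoroot j (D.sroot i)) m).2 • D.sroot j := by
  induction m with
  | zero => simp [altWord, dihedralProd, wordProd, dihedralCoords]
  | succ m ih =>
    rw [altWord, dihedralProd_cons, mul_smul, ih, D.s_act, dihedralCoords]
    cases m.bodd <;>
      simp only [Bool.bne_true, Bool.not_false, bne_self_eq_false, Bool.false_eq_true, if_true,
        if_false, map_add, map_zsmul, D.cartan_diag, smul_eq_mul] <;>
      module

/-- `m₀` is `2, 3, 4, 6` for `a_{ij} a_{ji} = 0, 1, 2, 3`. -/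
lemma exists_braid_of_mul_lt_four (hij : i ≠ j)
    (h : D.scoroot i (D.sroot j) * D.scoroot j (D.sroot i) < 4) :
    ∃ m₀, 0 < m₀ ∧ D.dihedralProd i j (altWord false m₀) = D.dihedralProd i j (altWord true m₀) ∧
      ∀ m < m₀, 0 ≤ (dihedralCoords (-D.scoroot i (D.sroot j)) (-D.scoroot j (D.sroot i)) m).1 ∧
        0 ≤ (dihedralCoords (-D.scoroot i (D.sroot j)) (-D.scoroot j (D.sroot i)) m).2 := by
  have hA := D.cartan_off i j hij
  have hB := D.cartan_off j i hij.symm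
  have hAB := D.cartan_zero i j
  obtain ⟨A, hA'⟩ : ∃ A, D.scoroot i (D.sroot j) = A := ⟨_, rfl⟩
  obtain ⟨B, hB'⟩ : ∃ B, D.scoroot j (D.sroot i) = B := ⟨_, rfl⟩
  rw [hA'] at hA hAB h ⊢
  rw [hB'] at hB hAB h ⊢
  have hA3 : -3 ≤ A := by rcases hB.lt_or_eq with hB | rfl <;> [nlinarith; simp_all]
  have hB3 : -3 ≤ B := by rcases hA.lt_or_eq with hA | rfl <;> [nlinarith; simp_all]
  interval_cases A <;> interval_cases B <;> simp only [Int.reduceNeg, Int.reduceMul] at hAB h ⊢ <;>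
    first
    | omega
    | (simp at hAB; done)
    | refine ⟨6, by norm_num, ?_, by decide⟩
    | refine ⟨4, by norm_num, ?_, by decide⟩
    | refine ⟨3, by norm_num, ?_, by decide⟩
    | refine ⟨2, by norm_num, ?_, by decide⟩
  all_goals
    refine D.eq_of_forall_smul_eq fun lam => ?_
    simp only [dihedralProd, wordProd, altWord, Nat.bodd_succ, Nat.bodd_zero, Bool.not_false,
      Bool.not_true, Bool.bne_true, Bool.bne_false, bne_self_eq_false, Bool.false_eq_true, if_true,
      if_false, List.map_cons, List.map_nil, List.prod_cons, List.prod_nil, mul_one, mul_smul,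
      D.s_act, map_sub, map_zsmul, D.cartan_diag, hA', hB', smul_eq_mul]
    module

variable {i j}

lemma eq_altWord_false_of_shortest {τ : List Bool}
    (hτ : τ.length = D.dihedralLen i j (D.dihedralProd i j τ))
    (hτi : D.dihedralLen i j (D.dihedralProd i j τ)
      ≤ D.dihedralLen i j (D.dihedralProd i j τ * D.s i)) :
    τ = altWord false τ.length := by
  obtain ⟨b, hb⟩ := eq_altWord_of_isChain (D.isChain_of_length_eq_dihedralLen i j hτ)
  cases b
  · exact hb
  cases hm : τ.length with
  | zero => rwa [hm] at hb
  | succ m =>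
    rw [hm, altWord_succ, Bool.not_true] at hb
    subst hb
    have := D.dihedralLen_mul_s_lt i j (τ := altWord false m) (by simpa [altWord_length] using hτ)
    omega

lemma length_lt_of_braid {τ : List Bool}
    (hτ : τ.length = D.dihedralLen i j (D.dihedralProd i j τ))
    (hτi : D.dihedralLen i j (D.dihedralProd i j τ)
      ≤ D.dihedralLen i j (D.dihedralProd i j τ * D.s i)) {m₀ : ℕ} (hm₀ : 0 < m₀)
    (hbraid : D.dihedralProd i j (altWord false m₀) = D.dihedralProd i j (altWord true m₀)) :
    τ.length < m₀ := by
  by_contra hge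
  obtain ⟨ρ, hρ⟩ := exists_altWord_add false (τ.length - m₀) m₀
  rw [Nat.sub_add_cancel (not_lt.mp hge), ← D.eq_altWord_false_of_shortest hτ hτi] at hρ
  obtain ⟨k, rfl⟩ := Nat.exists_eq_succ_of_ne_zero hm₀.ne'
  -- `ρ ++ altWord true (k + 1)` is another shortest word for the same element, ending in `i`
  have hsame : D.dihedralProd i j ((ρ ++ altWord false k) ++ [true]) = D.dihedralProd i j τ := by
    rw [List.append_assoc, show altWord false k ++ [true] = altWord true (k + 1) from
      (altWord_succ true k).symm, dihedralProd_append, ← hbraid, ← dihedralProd_append,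
      ← hρ]
  have hlen : (ρ ++ altWord false k).length + 1 = τ.length := by
    simp only [hρ, List.length_append, altWord_length]; omega
  have := D.dihedralLen_mul_s_lt i j (τ := ρ ++ altWord false k) (by rw [hsame, hlen, hτ])
  rw [hsame] at this
  omega

lemma exists_dihedralProd_smul_sroot (hij : i ≠ j) (σ : List Bool)
    (hσ : D.dihedralLen i j (D.dihedralProd i j σ)
      ≤ D.dihedralLen i j (D.dihedralProd i j σ * D.s i)) :
    ∃ x y : ℤ, 0 ≤ x ∧ 0 ≤ y ∧
      D.dihedralProd i j σ • D.sroot i = x • D.sroot i + y • D.sroot j := by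
  obtain ⟨τ, hτl, hτp⟩ := D.exists_length_eq_dihedralLen i j σ
  rw [← hτp] at hσ hτl ⊢
  rw [D.eq_altWord_false_of_shortest hτl hσ, dihedralProd_altWord_smul]
  suffices h : 0 ≤ (dihedralCoords (-D.scoroot i (D.sroot j)) (-D.scoroot j (D.sroot i))
      τ.length).1 ∧ 0 ≤ (dihedralCoords (-D.scoroot i (D.sroot j)) (-D.scoroot j (D.sroot i))
      τ.length).2 from ⟨_, _, h.1, h.2, rfl⟩
  by_cases h4 : 4 ≤ D.scoroot i (D.sroot j) * D.scoroot j (D.sroot i)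
  · exact dihedralCoords_nonneg (by linarith [D.cartan_off i j hij])
      (by linarith [D.cartan_off j i hij.symm]) (by linarith) _
  · obtain ⟨m₀, hm₀, hbraid, hnn⟩ := D.exists_braid_of_mul_lt_four i j hij (by omega)
    exact hnn _ (D.length_lt_of_braid hτl hσ hm₀ hbraid)

end Dihedral

section Positivity

lemma len_mul_dihedralProd_le (v : D.W) (i j : Fin D.n) (σ : List Bool) :
    D.len (v * D.dihedralProd i j σ) ≤ D.len v + σ.length := by
  obtain ⟨ω, hp, hl⟩ := D.exists_reduced v
  simpa [hl] using D.len_le_length (ω := ω ++ σ.map fun e => if e then i else j)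
    (by rw [wordProd_append, hp]; rfl)

lemma exists_minimal_mul_dihedralProd (i j : Fin D.n) {w v : D.W} {σ : List Bool}
    (hw : w = v * D.dihedralProd i j σ) (hl : D.len v + σ.length ≤ D.len w) :
    ∃ v' σ', w = v' * D.dihedralProd i j σ' ∧ D.len v' + σ'.length ≤ D.len w ∧
      D.len v' ≤ D.len (v' * D.s i) ∧ D.len v' ≤ D.len (v' * D.s j) := by
  induction hn : D.len v using Nat.strong_induction_on generalizing v σ with
  | _ n ih =>
    by_cases hi : D.len (v * D.s i) < D.len v
    · refine ih _ (hn ▸ hi) (v := v * D.s i) (σ := true :: σ) ?_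
        (by simp only [List.length_cons]; omega) rfl
      rw [dihedralProd_cons, if_pos rfl, mul_assoc, s_mul_s, hw]
    by_cases hj : D.len (v * D.s j) < D.len v
    · refine ih _ (hn ▸ hj) (v := v * D.s j) (σ := false :: σ) ?_
        (by simp only [List.length_cons]; omega) rfl
      rw [dihedralProd_cons, if_neg Bool.false_ne_true, mul_assoc, s_mul_s, hw]
    exact ⟨v, σ, hw, hl, not_lt.mp hi, not_lt.mp hj⟩

theorem smul_sroot_mem_posCone_of_len_le (w : D.W) (i : Fin D.n)
    (hwi : D.len w ≤ D.len (w * D.s i)) : w • D.sroot i ∈ D.posCone := by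
  induction hn : D.len w using Nat.strong_induction_on generalizing w i with
  | _ n ih =>
    by_cases hw1 : w = 1
    · rw [hw1, one_smul]
      exact D.sroot_mem_posCone i
    obtain ⟨j, hj⟩ := D.exists_len_mul_s_lt hw1
    have hij : i ≠ j := by rintro rfl; omega
    obtain ⟨v, σ, hw, hl, hvi, hvj⟩ := D.exists_minimal_mul_dihedralProd i j (w := w)
      (v := w * D.s j) (σ := [false]) (by simp [dihedralProd, wordProd, mul_s_mul_s])
      (by simp only [List.length_singleton]; omega)
    have hσ : σ ≠ [] := by
      rintro rfl
      simp only [dihedralProd, List.map_nil, wordProd, List.prod_nil, mul_one] at hw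
      subst hw
      omega
    have hv : D.len v < n := by
      have := List.length_pos_of_ne_nil hσ
      omega
    by_cases hd : D.dihedralLen i j (D.dihedralProd i j σ)
        ≤ D.dihedralLen i j (D.dihedralProd i j σ * D.s i)
    · obtain ⟨x, y, hx, hy, hxy⟩ := D.exists_dihedralProd_smul_sroot hij σ hd
      rw [hw, mul_smul, hxy, smul_add, smul_comm v x, smul_comm v y]
      exact add_mem (D.zsmul_mem_posCone (ih _ hv v i hvi rfl) hx)
        (D.zsmul_mem_posCone (ih _ hv v j hvj rfl) hy)
    -- otherwise `ℓ(w s_i) ≤ ℓ(v) + ℓ_{ij}(d s_i) < ℓ(v) + ℓ_{ij}(d) ≤ ℓ(w)` for `d = s_σ`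
    · obtain ⟨τ, hτl, hτp⟩ := D.exists_length_eq_dihedralLen i j (σ ++ [true])
      have hτ : w * D.s i = v * D.dihedralProd i j τ := by
        rw [hτp, dihedralProd_append, dihedralProd_true, hw, mul_assoc]
      have := D.len_mul_dihedralProd_le v i j τ
      have := D.dihedralLen_le i j σ
      rw [dihedralProd_append, dihedralProd_true] at hτl
      rw [hτ] at hwi
      omega

lemma neg_smul_sroot_mem_posCone_of_len_lt {w : D.W} {i : Fin D.n}
    (h : D.len (w * D.s i) < D.len w) : -(w • D.sroot i) ∈ D.posCone := by
  have := D.smul_sroot_mem_posCone_of_len_le (w * D.s i) i (by rw [mul_s_mul_s]; omega)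
  rwa [mul_smul, s_smul_sroot, smul_neg] at this

lemma smul_sroot_mem_posCone_or_neg (w : D.W) (i : Fin D.n) :
    w • D.sroot i ∈ D.posCone ∨ -(w • D.sroot i) ∈ D.posCone := by
  by_cases h : D.len w ≤ D.len (w * D.s i)
  · exact .inl (D.smul_sroot_mem_posCone_of_len_le w i h)
  · exact .inr (D.neg_smul_sroot_mem_posCone_of_len_lt (not_le.mp h))

lemma neg_sroot_notMem_posCone (k : Fin D.n) : -D.sroot k ∉ D.posCone := fun h => by
  have := D.coeff_nonneg_of_sum_mem_posCone (c := -Pi.single k 1)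
    (by simpa [Pi.single_apply] using h) k
  simp at this

lemma eq_one_of_forall_smul_sroot_eq {w : D.W} (h : ∀ k, w • D.sroot k = D.sroot k) : w = 1 := by
  by_contra hw
  obtain ⟨k, hk⟩ := D.exists_len_mul_s_lt hw
  exact D.neg_sroot_notMem_posCone k (h k ▸ D.neg_smul_sroot_mem_posCone_of_len_lt hk)

/-- A nontrivial transvection would move some simple root to a root with coefficients of both
signs. -/
lemma eq_one_of_smul_eq_add_smul_sroot {u : D.W} {i : Fin D.n} (f : D.Λ →+ ℤ)
    (hfi : f (D.sroot i) = 0) (hu : ∀ lam, u • lam = lam + f lam • D.sroot i) : u = 1 := by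
  have hu' : ∀ lam, u⁻¹ • lam = lam + (-f lam) • D.sroot i := fun lam => by
    rw [inv_smul_eq_iff, hu, map_add, map_zsmul, hfi, smul_zero, add_zero, neg_smul,
      neg_add_cancel_right]
  refine D.eq_one_of_forall_smul_sroot_eq fun k => ?_
  rw [hu]
  by_cases hki : k = i
  · rw [hki, hfi, zero_smul, add_zero]
  have h₁ := D.nonneg_of_add_smul_sroot_mem hki (hu _ ▸ D.smul_sroot_mem_posCone_or_neg u k)
  have h₂ := D.nonneg_of_add_smul_sroot_mem hki (hu' _ ▸ D.smul_sroot_mem_posCone_or_neg u⁻¹ k)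
  rw [show f (D.sroot k) = 0 by omega, zero_smul, add_zero]

lemma mul_s_mul_inv_eq_s {w : D.W} {i j : Fin D.n} (h : w • D.sroot j = D.sroot i) :
    w * D.s j * w⁻¹ = D.s i := by
  have hw : w⁻¹ • D.sroot i = D.sroot j := by rw [← h, inv_smul_smul]
  have key := D.eq_one_of_smul_eq_add_smul_sroot (u := D.s i * (w * D.s j * w⁻¹)) (i := i)
    ((D.scoroot j).comp (DistribSMul.toAddMonoidHom D.Λ w⁻¹) - D.scoroot i)
    (by simp [hw, D.cartan_diag]) fun lam => by
      simp only [mul_smul, D.s_act, smul_sub, smul_inv_smul, smul_comm w, h, map_sub, map_zsmul,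
        D.cartan_diag, AddMonoidHom.sub_apply, AddMonoidHom.comp_apply,
        DistribSMul.toAddMonoidHom_apply, smul_eq_mul]
      module
  rw [← inv_eq_of_mul_eq_one_right key, inv_eq_of_mul_eq_one_right (D.s_sq i)]

lemma refl_sroot (i : Fin D.n) : D.refl (D.sroot i) = D.s i := by
  have hmem : D.sroot i ∈ D.roots := ⟨1, i, (one_smul _ _).symm⟩
  rw [refl, dif_pos hmem]
  exact D.mul_s_mul_inv_eq_s hmem.choose_spec.choose_spec.symm

end Positivity

section TwistedGroupAlgebra

instance : Module D.Q D.QW := Module.compHom D.QW D.ι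

lemma smul_def (q : D.Q) (z : D.QW) : q • z = D.ι q * z := rfl

lemma linearCombination_eq_sum (f : D.W → D.QW) (c : D.W →₀ D.Q) :
    Finsupp.linearCombination D.Q f c = c.sum fun w q => D.ι q * f w :=
  Finsupp.linearCombination_apply _ _

noncomputable def deltaBasis : Module.Basis D.W D.Q D.QW :=
  .mk (v := D.δ)
    (fun c c' h => (D.qw_free _).unique (D.linearCombination_eq_sum _ c)
      (h.trans (D.linearCombination_eq_sum _ c')))
    (fun z _ => by
      obtain ⟨c, hc, -⟩ := D.qw_free z
      exact Finsupp.mem_span_range_iff_exists_finsupp.mpr ⟨c, hc.symm⟩)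

lemma coe_deltaBasis : ⇑D.deltaBasis = D.δ := Module.Basis.coe_mk _ _

def lowerSpan (l : ℕ) : Submodule D.Q D.QW := Submodule.span D.Q (D.δ '' {v | D.len v < l})

lemma lowerSpan_mono {l l' : ℕ} (h : l ≤ l') : D.lowerSpan l ≤ D.lowerSpan l' :=
  Submodule.span_mono (Set.image_mono fun _ hv => lt_of_lt_of_le hv h)

lemma delta_mem_lowerSpan {v : D.W} {l : ℕ} (h : D.len v < l) : D.δ v ∈ D.lowerSpan l :=
  Submodule.subset_span ⟨v, h, rfl⟩

lemma delta_s_mul_mem_lowerSpan (i : Fin D.n) {l : ℕ} {z : D.QW} (hz : z ∈ D.lowerSpan l) :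
    D.δ (D.s i) * z ∈ D.lowerSpan (l + 1) := by
  induction hz using Submodule.span_induction with
  | mem _ hx =>
    obtain ⟨v, hv, rfl⟩ := hx
    rw [← map_mul]
    exact D.delta_mem_lowerSpan (lt_of_le_of_lt (D.len_s_mul_le i v) (by simpa using hv))
  | zero => simp
  | add _ _ _ _ hx hy => rw [mul_add]; exact add_mem hx hy
  | smul q x _ hx =>
    rw [smul_def, ← mul_assoc, D.twist, mul_assoc, ← smul_def]
    exact Submodule.smul_mem _ _ hx

lemma exists_isUnit_prod_sub_smul_mem_lowerSpan (Z : Fin D.n → D.QW) (u v : Fin D.n → D.Q)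
    (hu : ∀ i, IsUnit (u i)) (hZ : ∀ i, Z i = D.ι (u i) * D.δ (D.s i) + D.ι (v i))
    (ω : List (Fin D.n)) :
    ∃ U : D.Q, IsUnit U ∧ (ω.map Z).prod - U • D.δ (D.wordProd ω) ∈ D.lowerSpan ω.length := by
  induction ω with
  | nil => exact ⟨1, isUnit_one, by simp [wordProd]⟩
  | cons i ω ih =>
    obtain ⟨U, hU, hr⟩ := ih
    obtain ⟨r, hr, hP⟩ : ∃ r ∈ D.lowerSpan ω.length,
        (ω.map Z).prod = U • D.δ (D.wordProd ω) + r :=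
      ⟨_, hr, (add_sub_cancel _ _).symm⟩
    refine ⟨u i * D.s i • U,
      (hu i).mul (hU.map (MulSemiringAction.toRingHom D.W D.Q (D.s i))), ?_⟩
    have hexp : ((i :: ω).map Z).prod - (u i * D.s i • U) • D.δ (D.wordProd (i :: ω))
        = u i • (D.δ (D.s i) * r) + (v i * U) • D.δ (D.wordProd ω) + v i • r := by
      simp only [List.map_cons, List.prod_cons, wordProd_cons, hP, hZ, smul_def, map_mul]
      rw [mul_assoc (D.ι (u i)), ← mul_assoc (D.ι (D.s i • U)), ← D.twist]
      noncomm_ring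
    rw [hexp]
    refine add_mem (add_mem (Submodule.smul_mem _ _ (D.delta_s_mul_mem_lowerSpan i hr))
      (Submodule.smul_mem _ _ (D.delta_mem_lowerSpan ?_))) (Submodule.smul_mem _ _
      (D.lowerSpan_mono (Nat.le_succ _) hr))
    simpa using Nat.lt_succ_of_le (D.len_le_length rfl)

end TwistedGroupAlgebra

lemma isUnit_xQ_sroot (i : Fin D.n) : IsUnit (D.xQ (D.sroot i)) :=
  @IsLocalization.map_units _ _ _ D.Q _ _ D.loc ⟨_, Submonoid.subset_closure
    ⟨D.sroot i, ⟨⟨1, i, (one_smul _ _).symm⟩, D.sroot_mem_posCone i⟩, rfl⟩⟩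

lemma Xi_eq (i : Fin D.n) : D.Xi i = D.ι (-Ring.inverse (D.xQ (D.sroot i))) * D.δ (D.s i)
    + D.ι (Ring.inverse (D.xQ (D.sroot i))) := by
  rw [Xi, Xel, refl_sroot, mul_sub, mul_one, map_neg, neg_mul, add_comm, sub_eq_add_neg]

lemma Yi_eq (i : Fin D.n) : D.Yi i = D.ι (Ring.inverse (D.xQ (D.sroot i))) * D.δ (D.s i)
    + D.ι (Ring.inverse (D.xQ (-D.sroot i))) := by
  rw [Yi, Yel, refl_sroot, add_comm]

lemma exists_isUnit_Xword_sub_smul_mem {w : D.W} {ω : List (Fin D.n)} (hω : D.IsReduced w ω) :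
    ∃ U : D.Q, IsUnit U ∧ D.Xword ω - U • D.δ w ∈ D.lowerSpan (D.len w) := by
  have := D.exists_isUnit_prod_sub_smul_mem_lowerSpan D.Xi _ _
    (fun i => (isUnit_ringInverse.mpr (D.isUnit_xQ_sroot i)).neg) D.Xi_eq ω
  rwa [hω.1, hω.2] at this

lemma exists_isUnit_Yword_sub_smul_mem {w : D.W} {ω : List (Fin D.n)} (hω : D.IsReduced w ω) :
    ∃ U : D.Q, IsUnit U ∧ D.Yword ω - U • D.δ w ∈ D.lowerSpan (D.len w) := by
  have := D.exists_isUnit_prod_sub_smul_mem_lowerSpan D.Yi _ _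
    (fun i => isUnit_ringInverse.mpr (D.isUnit_xQ_sroot i)) D.Yi_eq ω
  rwa [hω.1, hω.2] at this

lemma existsUnique_sum_of_triangular (f : D.W → D.QW)
    (hf : ∀ w, ∃ U : D.Q, IsUnit U ∧ f w - U • D.δ w ∈ D.lowerSpan (D.len w)) (z : D.QW) :
    ∃! c : D.W →₀ D.Q, z = c.sum fun w q => D.ι q * f w := by
  have hf' : ∀ w, ∃ U : D.Q, IsUnit U ∧
      f w - U • D.deltaBasis w ∈ Submodule.span D.Q (D.deltaBasis '' {v | D.len v < D.len w}) := by
    simpa only [coe_deltaBasis, lowerSpan] using hf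
  have hbij : Function.Bijective (Finsupp.linearCombination D.Q f) :=
    ⟨D.deltaBasis.linearIndependent_of_triangular D.len hf', by
      rw [← LinearMap.range_eq_top, Finsupp.range_linearCombination,
        D.deltaBasis.span_range_eq_top_of_triangular D.len hf']⟩
  simpa only [linearCombination_eq_sum, eq_comm] using hbij.existsUnique z

end DemazureSetup

/-- **Corollary 2.6**:  for any choice of reduced words `I_w`, both `{X_{I_w}}_{w ∈ W}`
and `{Y_{I_w}}_{w ∈ W}` are bases of `Q_W` as a left `Q`-module:  every element of
`Q_W` is a unique finite `Q`-linear combination of the `X_{I_w}` (resp. the `Y_{I_w}`). -/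
theorem Xword_Yword_bases_of_QW
    {R : Type} [CommRing R] (D : DemazureSetup R)
    (I : D.W → List (Fin D.n)) (hI : D.IsRedSystem I) :
    (∀ z : D.QW, ∃! c : D.W →₀ D.Q, z = c.sum fun w q => D.ι q * D.Xword (I w)) ∧
    (∀ z : D.QW, ∃! c : D.W →₀ D.Q, z = c.sum fun w q => D.ι q * D.Yword (I w)) :=
  ⟨D.existsUnique_sum_of_triangular _ fun w => D.exists_isUnit_Xword_sub_smul_mem (hI w),
    D.existsUnique_sum_of_triangular _ fun w => D.exists_isUnit_Yword_sub_smul_mem (hI w)⟩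
end
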